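/- arXiv:1708.05098 — 6 statements merged into one kernel-verified Lean document; each statement's English description precedes it below -/
import Mathlib

section
/- Let v be an even positive integer. There exist integers p, q, r with p^2 + 2q^2 + r^2 = v if and only if v is not of the form 2^(2k+1)(8m+7) for nonnegative integers k, m. -/
set_option maxHeartbeats 1000000

-- square residues
lemma parity_sq (a : ℤ) : a^2 % 2 = a % 2 := by
  rcases Int.even_or_odd a with ⟨j, hj⟩ | ⟨j, hj⟩ <;> subst hj
  · have : (j+j)^2 = 2*(2*j^2) := by ring
    rw [this]; omega
  · have : (2*j+1)^2 = 2*(2*j^2+2*j) + 1 := by ring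
    rw [this]; omega

lemma sq8 (a : ℤ) : a^2 % 8 = 0 ∨ a^2 % 8 = 1 ∨ a^2 % 8 = 4 := by
  have h := Int.emod_emod_of_dvd a (by norm_num : (4:ℤ) ∣ 8)
  have h4 : a % 4 = 0 ∨ a % 4 = 1 ∨ a % 4 = 2 ∨ a % 4 = 3 := by omega
  obtain ⟨q, hq⟩ : ∃ q, a = 4*q + a % 4 := ⟨a / 4, by omega⟩
  rcases h4 with h|h|h|h <;> rw [h] at hq
  · left; rw [hq]; ring_nf; omega
  · right; left
    have : a^2 = 8*(2*q^2 + q) + 1 := by rw [hq]; ring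
    omega
  · right; right
    have : a^2 = 8*(2*q^2+2*q) + 4 := by rw [hq]; ring
    omega
  · right; left
    have : a^2 = 8*(2*q^2+3*q+1) + 1 := by rw [hq]; ring
    omega

lemma sq4 (a : ℤ) : (Even a ∧ a^2 % 4 = 0) ∨ (¬ Even a ∧ a^2 % 4 = 1) := by
  rcases Int.even_or_odd a with h | h
  · obtain ⟨j, hj⟩ := h
    left; refine ⟨⟨j, hj⟩, ?_⟩
    have : a^2 = 4*j^2 := by rw [hj]; ring
    omega
  · obtain ⟨j, hj⟩ := h
    right
    constructor
    · rw [Int.even_iff]; omega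
    · have : a^2 = 4*(j^2+j) + 1 := by rw [hj]; ring
      omega

lemma not_three_sq (k m : ℕ) : ¬ ∃ a b c : ℤ, a^2 + b^2 + c^2 = 4^k * (8*m+7) := by
  induction k with
  | zero =>
    rintro ⟨a, b, c, h⟩
    have h8 : (a^2 + b^2 + c^2) % 8 = 7 := by
      rw [h]; push_cast; omega
    rcases sq8 a with ha|ha|ha <;> rcases sq8 b with hb|hb|hb <;> rcases sq8 c with hc|hc|hc <;>
      omega
  | succ k ih =>
    rintro ⟨a, b, c, h⟩
    have h4 : (a^2 + b^2 + c^2) % 4 = 0 := by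
      rw [h]; push_cast [pow_succ]
      have : (4:ℤ)^k * 4 * (8*m+7) = 4 * ((4:ℤ)^k * (8*m+7)) := by ring
      rw [this]; omega
    have ha := sq4 a; have hb := sq4 b; have hc := sq4 c
    have hea : Even a := by rcases ha with ⟨h,_⟩|⟨_,h⟩; exact h; rcases hb with ⟨_,h2⟩|⟨_,h2⟩ <;> rcases hc with ⟨_,h3⟩|⟨_,h3⟩ <;> omega
    have heb : Even b := by rcases hb with ⟨h,_⟩|⟨_,h2⟩; exact h; rcases ha with ⟨_,h1⟩|⟨_,h1⟩ <;> rcases hc with ⟨_,h3⟩|⟨_,h3⟩ <;> omega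
    have hec : Even c := by rcases hc with ⟨h,_⟩|⟨_,h3⟩; exact h; rcases ha with ⟨_,h1⟩|⟨_,h1⟩ <;> rcases hb with ⟨_,h2⟩|⟨_,h2⟩ <;> omega
    obtain ⟨a', rfl⟩ := hea; obtain ⟨b', rfl⟩ := heb; obtain ⟨c', rfl⟩ := hec
    exact ih ⟨a', b', c', by nlinarith [h, pow_succ (4:ℤ) k]⟩

lemma round_lemma (β L : ℤ) (hβ : 0 < β) : ∃ X : ℤ, (2*(β*X + L))^2 ≤ β^2 := by
  have hd := Int.emod_add_mul_ediv L β
  rcases le_or_gt (2*(L % β)) β with h | h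
  · refine ⟨-(L / β), ?_⟩
    have h0 : β*(-(L/β)) + L = L % β := by linarith [hd]
    rw [h0]
    have h1 : 0 ≤ L % β := Int.emod_nonneg L (ne_of_gt hβ)
    nlinarith
  · refine ⟨-(L / β) - 1, ?_⟩
    have h0 : β*(-(L/β) - 1) + L = L % β - β := by linarith [hd]
    rw [h0]
    have h1 : L % β < β := Int.emod_lt_of_pos L hβ
    nlinarith

lemma bin_min_le (a b c : ℤ)
    (hpos : ∀ x y : ℤ, ¬(x = 0 ∧ y = 0) → 0 < a*x^2 + 2*b*x*y + c*y^2) :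
    ∃ β : ℤ, 0 < β ∧ (∃ x y : ℤ, ¬(x=0 ∧ y=0) ∧ a*x^2+2*b*x*y+c*y^2 = β) ∧
      (∀ x y : ℤ, ¬(x=0∧y=0) → β ≤ a*x^2+2*b*x*y+c*y^2) ∧ 3*β^2 ≤ 4*(a*c - b^2) := by
  obtain ⟨β, ⟨⟨x₀, y₀, hne, hw⟩, hlb⟩⟩ := Int.exists_least_of_bdd
    (P := fun z => ∃ x y : ℤ, ¬(x=0 ∧ y=0) ∧ a*x^2+2*b*x*y+c*y^2 = z)
    ⟨0, fun z ⟨x, y, hxy, hz⟩ => le_of_lt (hz ▸ hpos x y hxy)⟩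
    ⟨a, 1, 0, by simp, by ring⟩
  have hβpos : 0 < β := hw ▸ hpos x₀ y₀ hne
  have hlb' : ∀ x y : ℤ, ¬(x=0∧y=0) → β ≤ a*x^2+2*b*x*y+c*y^2 :=
    fun x y h => hlb _ ⟨x, y, h, rfl⟩
  refine ⟨β, hβpos, ⟨x₀, y₀, hne, hw⟩, hlb', ?_⟩
  -- the min vector is primitive
  have hg : Int.gcd x₀ y₀ = 1 := by
    set g : ℕ := Int.gcd x₀ y₀ with hgdef
    have hgne : g ≠ 0 := by
      intro h0
      exact hne ⟨Int.gcd_eq_zero_iff.mp h0 |>.1, Int.gcd_eq_zero_iff.mp h0 |>.2⟩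
    obtain ⟨x₁, hx₁⟩ : (g:ℤ) ∣ x₀ := Int.gcd_dvd_left _ _
    obtain ⟨y₁, hy₁⟩ : (g:ℤ) ∣ y₀ := Int.gcd_dvd_right _ _
    have hne₁ : ¬(x₁ = 0 ∧ y₁ = 0) := by
      rintro ⟨rfl, rfl⟩
      exact hne ⟨by simpa using hx₁, by simpa using hy₁⟩
    have hval : a*x₁^2+2*b*x₁*y₁+c*y₁^2 ≥ β := hlb' x₁ y₁ hne₁
    have heq : (g:ℤ)^2 * (a*x₁^2+2*b*x₁*y₁+c*y₁^2) = β := by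
      rw [← hw, hx₁, hy₁]; ring
    have hg1 : (g:ℤ)^2 ≤ 1 := by nlinarith
    have : (1:ℤ) ≤ (g:ℤ) := by exact_mod_cast Nat.one_le_iff_ne_zero.mpr hgne
    have : (g:ℤ) = 1 := by nlinarith
    exact_mod_cast this
  have hbez : (1:ℤ) = x₀ * Int.gcdA x₀ y₀ + y₀ * Int.gcdB x₀ y₀ := by
    rw [← Int.gcd_eq_gcd_ab, hg]; norm_num
  set s := Int.gcdA x₀ y₀
  set t := Int.gcdB x₀ y₀
  set h' := a*x₀*(-t) + b*(x₀*s - t*y₀) + c*y₀*s with hh'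
  set e' := a*t^2 - 2*b*t*s + c*s^2 with he'
  have key : ∀ X Y : ℤ, a*(x₀*X - t*Y)^2 + 2*b*(x₀*X - t*Y)*(y₀*X + s*Y) +
      c*(y₀*X + s*Y)^2 = β*X^2 + 2*h'*X*Y + e'*Y^2 := by
    intro X Y
    rw [hh', he']
    linear_combination X^2 * hw
  have hdet' : β*e' - h'^2 = a*c - b^2 := by
    rw [hh', he']
    linear_combination (-(a*t^2 - 2*b*t*s + c*s^2)) * hw +
      (-(a*c-b^2)*(1+x₀*s+y₀*t)) * hbez
  have hmin' : ∀ X Y : ℤ, ¬(X=0∧Y=0) → β ≤ β*X^2+2*h'*X*Y+e'*Y^2 := by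
    intro X Y hXY
    rw [← key]
    apply hlb'
    rintro ⟨h1, h2⟩
    refine hXY ⟨?_, ?_⟩
    · have : X = s*(x₀*X-t*Y) + t*(y₀*X+s*Y) := by linear_combination X * hbez
      rw [h1, h2] at this; simpa using this
    · have : Y = -y₀*(x₀*X-t*Y) + x₀*(y₀*X+s*Y) := by linear_combination Y * hbez
      rw [h1, h2] at this; simpa using this
  obtain ⟨X, hX⟩ := round_lemma β h' hβpos
  have hV : β ≤ β*X^2+2*h'*X*1+e'*1^2 := hmin' X 1 (by simp)
  have hiden : β*(β*X^2+2*h'*X*1+e'*1^2) = (β*X+h')^2 + (β*e' - h'^2) := by ring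
  nlinarith [hV, hiden, hdet', hX, hβpos]
lemma bin_decomp (a b c : ℤ)
    (hpos : ∀ x y : ℤ, ¬(x = 0 ∧ y = 0) → 0 < a*x^2 + 2*b*x*y + c*y^2)
    (hdet : a*c - b^2 = 1) :
    ∃ p q r s : ℤ, ∀ x y : ℤ, a*x^2+2*b*x*y+c*y^2 = (p*x+q*y)^2 + (r*x+s*y)^2 := by
  obtain ⟨β, hβpos, ⟨x₀, y₀, hne, hw⟩, hlb', hbnd⟩ := bin_min_le a b c hpos
  rw [hdet] at hbnd
  have hβ1 : β = 1 := by nlinarith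
  subst hβ1
  -- primitivity & Bezout (as in bin_min_le)
  have hg : Int.gcd x₀ y₀ = 1 := by
    set g : ℕ := Int.gcd x₀ y₀ with hgdef
    have hgne : g ≠ 0 := by
      intro h0
      exact hne ⟨Int.gcd_eq_zero_iff.mp h0 |>.1, Int.gcd_eq_zero_iff.mp h0 |>.2⟩
    obtain ⟨x₁, hx₁⟩ : (g:ℤ) ∣ x₀ := Int.gcd_dvd_left _ _
    obtain ⟨y₁, hy₁⟩ : (g:ℤ) ∣ y₀ := Int.gcd_dvd_right _ _
    have hne₁ : ¬(x₁ = 0 ∧ y₁ = 0) := by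
      rintro ⟨rfl, rfl⟩
      exact hne ⟨by simpa using hx₁, by simpa using hy₁⟩
    have hval : a*x₁^2+2*b*x₁*y₁+c*y₁^2 ≥ 1 := hlb' x₁ y₁ hne₁
    have heq : (g:ℤ)^2 * (a*x₁^2+2*b*x₁*y₁+c*y₁^2) = 1 := by
      rw [← hw, hx₁, hy₁]; ring
    have hg1 : (g:ℤ)^2 ≤ 1 := by nlinarith
    have : (1:ℤ) ≤ (g:ℤ) := by exact_mod_cast Nat.one_le_iff_ne_zero.mpr hgne
    have : (g:ℤ) = 1 := by nlinarith
    exact_mod_cast this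
  have hbez : (1:ℤ) = x₀ * Int.gcdA x₀ y₀ + y₀ * Int.gcdB x₀ y₀ := by
    rw [← Int.gcd_eq_gcd_ab, hg]; norm_num
  set s := Int.gcdA x₀ y₀
  set t := Int.gcdB x₀ y₀
  set h' := a*x₀*(-t) + b*(x₀*s - t*y₀) + c*y₀*s with hh'
  set e' := a*t^2 - 2*b*t*s + c*s^2 with he'
  have key : ∀ X Y : ℤ, a*(x₀*X - t*Y)^2 + 2*b*(x₀*X - t*Y)*(y₀*X + s*Y) +
      c*(y₀*X + s*Y)^2 = 1*X^2 + 2*h'*X*Y + e'*Y^2 := by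
    intro X Y
    rw [hh', he']
    linear_combination X^2 * hw
  have hdet' : 1*e' - h'^2 = 1 := by
    rw [hh', he']
    linear_combination (-(a*t^2 - 2*b*t*s + c*s^2)) * hw +
      (-(a*c-b^2)*(1+x₀*s+y₀*t)) * hbez + hdet
  refine ⟨s - h'*(-y₀)*(-1), t + h'*x₀, -y₀, x₀, ?_⟩
  intro x y
  obtain ⟨X, hXdef⟩ : ∃ X : ℤ, X = s*x + t*y := ⟨_, rfl⟩
  obtain ⟨Y, hYdef⟩ : ∃ Y : ℤ, Y = -y₀*x + x₀*y := ⟨_, rfl⟩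
  have hX : x₀*X - t*Y = x := by
    rw [hXdef, hYdef]; linear_combination (-x) * hbez
  have hY : y₀*X + s*Y = y := by
    rw [hXdef, hYdef]; linear_combination (-y) * hbez
  calc a*x^2+2*b*x*y+c*y^2
      = a*(x₀*X - t*Y)^2 + 2*b*(x₀*X - t*Y)*(y₀*X + s*Y) + c*(y₀*X + s*Y)^2 := by
        rw [hX, hY]
    _ = 1*X^2 + 2*h'*X*Y + e'*Y^2 := key X Y
    _ = (X + h'*Y)^2 + Y^2 := by linear_combination Y^2 * hdet'
    _ = ((s - h'*(-y₀)*(-1))*x+(t + h'*x₀)*y)^2 + ((-y₀)*x+x₀*y)^2 := by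
        rw [hXdef, hYdef]; ring

-- quadratic form F(x,y,z) = a x² + d y² + g z² + 2b xy + 2c xz + 2e yz
-- det3 = a d g + 2 b c e - a e² - d b² - g c²

lemma tern_transform (a b c d e g x₀ y₀ z₀ u₁ u₂ u₃ w₁ w₂ w₃ a' b' c' d' e' g' : ℤ)
    (ha' : a' = a*x₀^2 + d*y₀^2 + g*z₀^2 + 2*b*x₀*y₀ + 2*c*x₀*z₀ + 2*e*y₀*z₀)
    (hb' : b' = a*x₀*u₁ + d*y₀*u₂ + g*z₀*u₃ + b*(x₀*u₂ + y₀*u₁) + c*(x₀*u₃ + z₀*u₁)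
      + e*(y₀*u₃ + z₀*u₂))
    (hc' : c' = a*x₀*w₁ + d*y₀*w₂ + g*z₀*w₃ + b*(x₀*w₂ + y₀*w₁) + c*(x₀*w₃ + z₀*w₁)
      + e*(y₀*w₃ + z₀*w₂))
    (hd' : d' = a*u₁^2 + d*u₂^2 + g*u₃^2 + 2*b*u₁*u₂ + 2*c*u₁*u₃ + 2*e*u₂*u₃)
    (he' : e' = a*u₁*w₁ + d*u₂*w₂ + g*u₃*w₃ + b*(u₁*w₂ + u₂*w₁) + c*(u₁*w₃ + u₃*w₁)
      + e*(u₂*w₃ + u₃*w₂))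
    (hg' : g' = a*w₁^2 + d*w₂^2 + g*w₃^2 + 2*b*w₁*w₂ + 2*c*w₁*w₃ + 2*e*w₂*w₃) :
    (∀ X Y Z : ℤ,
      a*(x₀*X + u₁*Y + w₁*Z)^2 + d*(y₀*X + u₂*Y + w₂*Z)^2 + g*(z₀*X + u₃*Y + w₃*Z)^2
      + 2*b*(x₀*X + u₁*Y + w₁*Z)*(y₀*X + u₂*Y + w₂*Z)
      + 2*c*(x₀*X + u₁*Y + w₁*Z)*(z₀*X + u₃*Y + w₃*Z)
      + 2*e*(y₀*X + u₂*Y + w₂*Z)*(z₀*X + u₃*Y + w₃*Z)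
      = a'*X^2 + d'*Y^2 + g'*Z^2 + 2*b'*X*Y + 2*c'*X*Z + 2*e'*Y*Z) ∧
    (a'*d'*g' + 2*b'*c'*e' - a'*e'^2 - g'*b'^2 - d'*c'^2
      = (x₀*(u₂*w₃ - u₃*w₂) - u₁*(y₀*w₃ - z₀*w₂) + w₁*(y₀*u₃ - z₀*u₂))^2
        * (a*d*g + 2*b*c*e - a*e^2 - g*b^2 - d*c^2)) := by
  subst ha' hb' hc' hd' he' hg'
  constructor
  · intro X Y Z; ring
  · ring

lemma inj3 (x₀ y₀ z₀ u₁ u₂ u₃ w₁ w₂ w₃ X Y Z : ℤ)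
    (hdetT : x₀*(u₂*w₃ - u₃*w₂) - u₁*(y₀*w₃ - z₀*w₂) + w₁*(y₀*u₃ - z₀*u₂) = 1)
    (h1 : x₀*X + u₁*Y + w₁*Z = 0) (h2 : y₀*X + u₂*Y + w₂*Z = 0)
    (h3 : z₀*X + u₃*Y + w₃*Z = 0) : X = 0 ∧ Y = 0 ∧ Z = 0 := by
  refine ⟨?_, ?_, ?_⟩
  · have : X * (x₀*(u₂*w₃ - u₃*w₂) - u₁*(y₀*w₃ - z₀*w₂) + w₁*(y₀*u₃ - z₀*u₂)) =
      (u₂*w₃-u₃*w₂)*(x₀*X + u₁*Y + w₁*Z) - (u₁*w₃-u₃*w₁)*(y₀*X + u₂*Y + w₂*Z)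
      + (u₁*w₂-u₂*w₁)*(z₀*X + u₃*Y + w₃*Z) := by ring
    rw [hdetT, h1, h2, h3] at this; simpa using this
  · have : Y * (x₀*(u₂*w₃ - u₃*w₂) - u₁*(y₀*w₃ - z₀*w₂) + w₁*(y₀*u₃ - z₀*u₂)) =
      -(y₀*w₃-z₀*w₂)*(x₀*X + u₁*Y + w₁*Z) + (x₀*w₃-z₀*w₁)*(y₀*X + u₂*Y + w₂*Z)
      - (x₀*w₂-y₀*w₁)*(z₀*X + u₃*Y + w₃*Z) := by ring
    rw [hdetT, h1, h2, h3] at this; simpa using this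
  · have : Z * (x₀*(u₂*w₃ - u₃*w₂) - u₁*(y₀*w₃ - z₀*w₂) + w₁*(y₀*u₃ - z₀*u₂)) =
      (y₀*u₃-z₀*u₂)*(x₀*X + u₁*Y + w₁*Z) - (x₀*u₃-z₀*u₁)*(y₀*X + u₂*Y + w₂*Z)
      + (x₀*u₂-y₀*u₁)*(z₀*X + u₃*Y + w₃*Z) := by ring
    rw [hdetT, h1, h2, h3] at this; simpa using this

lemma split3 (β b' c' d' e' g' X Y Z : ℤ) :
    β*(β*X^2 + d'*Y^2 + g'*Z^2 + 2*b'*X*Y + 2*c'*X*Z + 2*e'*Y*Z) =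
    (β*X + b'*Y + c'*Z)^2 +
      ((β*d'-b'^2)*Y^2 + 2*(β*e'-b'*c')*Y*Z + (β*g'-c'^2)*Z^2) := by ring

lemma det2Q (β b' c' d' e' g' : ℤ) :
    (β*d'-b'^2)*(β*g'-c'^2) - (β*e'-b'*c')^2 =
    β * (β*d'*g' + 2*b'*c'*e' - β*e'^2 - g'*b'^2 - d'*c'^2) := by ring

lemma complete3 (x y z : ℤ) (hprim : Int.gcd (Int.gcd x y) z = 1) :
    ∃ u₁ u₂ u₃ w₁ w₂ w₃ : ℤ,
      x*(u₂*w₃ - u₃*w₂) - u₁*(y*w₃ - z*w₂) + w₁*(y*u₃ - z*u₂) = 1 := by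
  by_cases hg0 : Int.gcd x y = 0
  · obtain ⟨hx0, hy0⟩ := Int.gcd_eq_zero_iff.mp hg0
    subst hx0 hy0
    rw [hg0] at hprim
    have hz : z * z = 1 := by
      have h1 : z.natAbs = 1 := by simpa [Int.gcd] using hprim
      have := Int.natAbs_eq z
      rcases this with h|h <;> rw [h] <;> rw [h1] <;> ring
    exact ⟨1, 0, 0, 0, z, 0, by linear_combination hz⟩
  · set G : ℕ := Int.gcd x y with hGdef
    obtain ⟨x', hx'⟩ : (G:ℤ) ∣ x := Int.gcd_dvd_left _ _
    obtain ⟨y', hy'⟩ : (G:ℤ) ∣ y := Int.gcd_dvd_right _ _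
    have hGz : (G:ℤ) ≠ 0 := by exact_mod_cast hg0
    have hbez1 : (G:ℤ) = x * Int.gcdA x y + y * Int.gcdB x y := Int.gcd_eq_gcd_ab x y
    set s := Int.gcdA x y
    set t := Int.gcdB x y
    have hb1 : x'*s + y'*t = 1 := by
      apply mul_left_cancel₀ hGz
      rw [mul_one]
      rw [hx', hy'] at hbez1
      linear_combination -hbez1
    have hbez2 : (1:ℤ) = (G:ℤ) * Int.gcdA (G:ℤ) z + z * Int.gcdB (G:ℤ) z := by
      have := Int.gcd_eq_gcd_ab (G:ℤ) z
      rw [hprim] at this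
      exact_mod_cast this
    set u := Int.gcdA (G:ℤ) z
    set w := Int.gcdB (G:ℤ) z
    refine ⟨-t, s, 0, -w*x', -w*y', u, ?_⟩
    rw [hx', hy']
    linear_combination ((G:ℤ)*u + z*w) * hb1 - hbez2

lemma tern_transform' (a b c d e g x₀ y₀ z₀ u₁ u₂ u₃ w₁ w₂ w₃ β : ℤ)
    (hw : a*x₀^2 + d*y₀^2 + g*z₀^2 + 2*b*x₀*y₀ + 2*c*x₀*z₀ + 2*e*y₀*z₀ = β) :
    ∃ b' c' d' e' g' : ℤ,
      (∀ X Y Z : ℤ,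
        a*(x₀*X + u₁*Y + w₁*Z)^2 + d*(y₀*X + u₂*Y + w₂*Z)^2 + g*(z₀*X + u₃*Y + w₃*Z)^2
        + 2*b*(x₀*X + u₁*Y + w₁*Z)*(y₀*X + u₂*Y + w₂*Z)
        + 2*c*(x₀*X + u₁*Y + w₁*Z)*(z₀*X + u₃*Y + w₃*Z)
        + 2*e*(y₀*X + u₂*Y + w₂*Z)*(z₀*X + u₃*Y + w₃*Z)
        = β*X^2 + d'*Y^2 + g'*Z^2 + 2*b'*X*Y + 2*c'*X*Z + 2*e'*Y*Z) ∧
      (β*d'*g' + 2*b'*c'*e' - β*e'^2 - g'*b'^2 - d'*c'^2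
        = (x₀*(u₂*w₃ - u₃*w₂) - u₁*(y₀*w₃ - z₀*w₂) + w₁*(y₀*u₃ - z₀*u₂))^2
          * (a*d*g + 2*b*c*e - a*e^2 - g*b^2 - d*c^2)) := by
  obtain ⟨k1, k2⟩ := tern_transform a b c d e g x₀ y₀ z₀ u₁ u₂ u₃ w₁ w₂ w₃
    β _ _ _ _ _ hw.symm rfl rfl rfl rfl rfl
  exact ⟨_, _, _, _, _, k1, k2⟩

lemma tern_decomp (a b c d e g : ℤ)
    (hpos : ∀ x y z : ℤ, ¬(x=0 ∧ y=0 ∧ z=0) →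
      0 < a*x^2 + d*y^2 + g*z^2 + 2*b*x*y + 2*c*x*z + 2*e*y*z)
    (hdet : a*d*g + 2*b*c*e - a*e^2 - g*b^2 - d*c^2 = 1)
    (x y z : ℤ) :
    ∃ x1 x2 x3 : ℤ,
      a*x^2 + d*y^2 + g*z^2 + 2*b*x*y + 2*c*x*z + 2*e*y*z = x1^2 + x2^2 + x3^2 := by
  obtain ⟨β, ⟨⟨x₀, y₀, z₀, hne, hw⟩, hlb⟩⟩ := Int.exists_least_of_bdd
    (P := fun v => ∃ p q r : ℤ, ¬(p=0 ∧ q=0 ∧ r=0) ∧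
      a*p^2 + d*q^2 + g*r^2 + 2*b*p*q + 2*c*p*r + 2*e*q*r = v)
    ⟨0, fun v ⟨p,q,r,h,hv⟩ => le_of_lt (hv ▸ hpos p q r h)⟩
    ⟨a, 1, 0, 0, by simp, by ring⟩
  have hβpos : 0 < β := hw ▸ hpos x₀ y₀ z₀ hne
  have hlb' : ∀ p q r : ℤ, ¬(p=0 ∧ q=0 ∧ r=0) →
      β ≤ a*p^2 + d*q^2 + g*r^2 + 2*b*p*q + 2*c*p*r + 2*e*q*r :=
    fun p q r h => hlb _ ⟨p, q, r, h, rfl⟩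
  -- primitivity of the minimal vector
  have hg : Int.gcd (Int.gcd x₀ y₀) z₀ = 1 := by
    set G : ℕ := Int.gcd (Int.gcd x₀ y₀) z₀ with hGdef
    have hgne : G ≠ 0 := by
      intro h0
      obtain ⟨ha0, hz0⟩ := Int.gcd_eq_zero_iff.mp h0
      have : (Int.gcd x₀ y₀ : ℕ) = 0 := by exact_mod_cast ha0
      obtain ⟨hx0, hy0⟩ := Int.gcd_eq_zero_iff.mp this
      exact hne ⟨hx0, hy0, hz0⟩
    obtain ⟨x₁, hx₁⟩ : (G:ℤ) ∣ x₀ := dvd_trans (Int.gcd_dvd_left _ _) (Int.gcd_dvd_left _ _)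
    obtain ⟨y₁, hy₁⟩ : (G:ℤ) ∣ y₀ := dvd_trans (Int.gcd_dvd_left _ _) (Int.gcd_dvd_right _ _)
    obtain ⟨z₁, hz₁⟩ : (G:ℤ) ∣ z₀ := Int.gcd_dvd_right _ _
    have hne₁ : ¬(x₁ = 0 ∧ y₁ = 0 ∧ z₁ = 0) := by
      rintro ⟨rfl, rfl, rfl⟩
      exact hne ⟨by simpa using hx₁, by simpa using hy₁, by simpa using hz₁⟩
    have hval := hlb' x₁ y₁ z₁ hne₁
    have heq : (G:ℤ)^2 * (a*x₁^2 + d*y₁^2 + g*z₁^2 + 2*b*x₁*y₁ + 2*c*x₁*z₁ + 2*e*y₁*z₁)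
        = β := by rw [← hw, hx₁, hy₁, hz₁]; ring
    have hG1 : (1:ℤ) ≤ (G:ℤ) := by exact_mod_cast Nat.one_le_iff_ne_zero.mpr hgne
    obtain ⟨V, hVdef⟩ : ∃ V, a*x₁^2 + d*y₁^2 + g*z₁^2 + 2*b*x₁*y₁ + 2*c*x₁*z₁ + 2*e*y₁*z₁
        = V := ⟨_, rfl⟩
    rw [hVdef] at hval heq
    have : (G:ℤ) = 1 := by
      by_contra hne1
      have h2 : 2 ≤ (G:ℤ) := by omega
      have hVpos : 0 < V := lt_of_lt_of_le hβpos hval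
      have h4 : (4:ℤ) ≤ (G:ℤ)^2 := by nlinarith
      have h5 : 4*V ≤ (G:ℤ)^2*V := mul_le_mul_of_nonneg_right h4 hVpos.le
      linarith
    exact_mod_cast this
  obtain ⟨u₁, u₂, u₃, w₁, w₂, w₃, hdetT⟩ := complete3 x₀ y₀ z₀ hg
  obtain ⟨b', c', d', e', g', key, hdet3'⟩ :=
    tern_transform' a b c d e g x₀ y₀ z₀ u₁ u₂ u₃ w₁ w₂ w₃ β hw
  rw [hdetT, hdet, one_pow, mul_one] at hdet3'
  have hmin3' : ∀ X Y Z : ℤ, ¬(X=0 ∧ Y=0 ∧ Z=0) →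
      β ≤ β*X^2 + d'*Y^2 + g'*Z^2 + 2*b'*X*Y + 2*c'*X*Z + 2*e'*Y*Z := by
    intro X Y Z hXYZ
    rw [← key X Y Z]
    apply hlb'
    rintro ⟨h1, h2, h3⟩
    exact hXYZ (inj3 x₀ y₀ z₀ u₁ u₂ u₃ w₁ w₂ w₃ X Y Z hdetT h1 h2 h3)
  have hQbnd : ∀ Y Z : ℤ, ¬(Y=0 ∧ Z=0) →
      3*β^2 ≤ 4*((β*d'-b'^2)*Y^2 + 2*(β*e'-b'*c')*Y*Z + (β*g'-c'^2)*Z^2) := by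
    intro Y Z hYZ
    obtain ⟨X, hX⟩ := round_lemma β (b'*Y + c'*Z) hβpos
    have hv := hmin3' X Y Z (fun h => hYZ ⟨h.2.1, h.2.2⟩)
    have hs := split3 β b' c' d' e' g' X Y Z
    nlinarith [hv, hs, hX, hβpos]
  have hQpos : ∀ Y Z : ℤ, ¬(Y=0 ∧ Z=0) →
      0 < (β*d'-b'^2)*Y^2 + 2*(β*e'-b'*c')*Y*Z + (β*g'-c'^2)*Z^2 := by
    intro Y Z hYZ
    have := hQbnd Y Z hYZ
    nlinarith [hβpos]
  have hQdet : (β*d'-b'^2)*(β*g'-c'^2) - (β*e'-b'*c')^2 = β := by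
    rw [det2Q, hdet3', mul_one]
  obtain ⟨β₂, hβ₂pos, ⟨Y₀, Z₀, hne₂, hw₂⟩, _, hbnd₂⟩ :=
    bin_min_le (β*d'-b'^2) (β*e'-b'*c') (β*g'-c'^2) hQpos
  rw [hQdet] at hbnd₂
  have h2 : 3*β^2 ≤ 4*β₂ := by
    have := hQbnd Y₀ Z₀ hne₂
    rw [hw₂] at this
    linarith
  have hβ1 : β = 1 := by
    have h3 : (3*β^2)*(3*β^2) ≤ (4*β₂)*(4*β₂) :=
      mul_self_le_mul_self (by positivity) h2
    by_contra hne1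
    have : 2 ≤ β := by omega
    nlinarith [hβpos, hβ₂pos, hbnd₂, h3]
  subst hβ1
  obtain ⟨p, q, r, s, hQdecomp⟩ :=
    bin_decomp (1*d'-b'^2) (1*e'-b'*c') (1*g'-c'^2) hQpos hQdet
  obtain ⟨X, hXd⟩ : ∃ X : ℤ, X = (u₂*w₃-u₃*w₂)*x - (u₁*w₃-u₃*w₁)*y + (u₁*w₂-u₂*w₁)*z :=
    ⟨_, rfl⟩
  obtain ⟨Y, hYd⟩ : ∃ Y : ℤ, Y = -(y₀*w₃-z₀*w₂)*x + (x₀*w₃-z₀*w₁)*y - (x₀*w₂-y₀*w₁)*z :=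
    ⟨_, rfl⟩
  obtain ⟨Z, hZd⟩ : ∃ Z : ℤ, Z = (y₀*u₃-z₀*u₂)*x - (x₀*u₃-z₀*u₁)*y + (x₀*u₂-y₀*u₁)*z :=
    ⟨_, rfl⟩
  have hTX : x₀*X + u₁*Y + w₁*Z = x := by
    rw [hXd, hYd, hZd]; linear_combination x * hdetT
  have hTY : y₀*X + u₂*Y + w₂*Z = y := by
    rw [hXd, hYd, hZd]; linear_combination y * hdetT
  have hTZ : z₀*X + u₃*Y + w₃*Z = z := by
    rw [hXd, hYd, hZd]; linear_combination z * hdetT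
  refine ⟨1*X + b'*Y + c'*Z, p*Y+q*Z, r*Y+s*Z, ?_⟩
  calc a*x^2 + d*y^2 + g*z^2 + 2*b*x*y + 2*c*x*z + 2*e*y*z
      = a*(x₀*X + u₁*Y + w₁*Z)^2 + d*(y₀*X + u₂*Y + w₂*Z)^2 + g*(z₀*X + u₃*Y + w₃*Z)^2
        + 2*b*(x₀*X + u₁*Y + w₁*Z)*(y₀*X + u₂*Y + w₂*Z)
        + 2*c*(x₀*X + u₁*Y + w₁*Z)*(z₀*X + u₃*Y + w₃*Z)
        + 2*e*(y₀*X + u₂*Y + w₂*Z)*(z₀*X + u₃*Y + w₃*Z) := by rw [hTX, hTY, hTZ]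
    _ = 1*X^2 + d'*Y^2 + g'*Z^2 + 2*b'*X*Y + 2*c'*X*Z + 2*e'*Y*Z := key X Y Z
    _ = (1*X + b'*Y + c'*Z)^2 +
        ((1*d'-b'^2)*Y^2 + 2*(1*e'-b'*c')*Y*Z + (1*g'-c'^2)*Z^2) := by
          linear_combination split3 1 b' c' d' e' g' X Y Z
    _ = (1*X + b'*Y + c'*Z)^2 + ((p*Y+q*Z)^2 + (r*Y+s*Z)^2) := by rw [hQdecomp Y Z]
    _ = (1*X + b'*Y + c'*Z)^2 + (p*Y+q*Z)^2 + (r*Y+s*Z)^2 := by ring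
lemma build (N k m : ℕ) (hk : 0 < k) (hm : 0 < m)
    (hNm : N * m = k + 1) (b₀ t : ℤ) (hkt : (k:ℤ)*t = b₀^2 + m) :
    ∃ a b c : ℤ, a^2 + b^2 + c^2 = N := by
  have hNmZ : (N:ℤ) * m = k + 1 := by exact_mod_cast hNm
  have hkZ : (0:ℤ) < k := by exact_mod_cast hk
  have hmZ : (0:ℤ) < m := by exact_mod_cast hm
  have key : ∀ x y z : ℤ,
      ((k:ℤ)*m)*((k:ℤ)*x^2 + t*y^2 + (N:ℤ)*z^2 + 2*b₀*x*y + 2*0*x*z + 2*1*y*z) =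
      (m:ℤ)*((k:ℤ)*x+b₀*y)^2 + ((m:ℤ)*y+(k:ℤ)*z)^2 + (k:ℤ)*z^2 := by
    intro x y z
    linear_combination ((m:ℤ)*y^2) * hkt + ((k:ℤ)*z^2) * hNmZ
  have hpos : ∀ x y z : ℤ, ¬(x=0 ∧ y=0 ∧ z=0) →
      0 < (k:ℤ)*x^2 + t*y^2 + (N:ℤ)*z^2 + 2*b₀*x*y + 2*0*x*z + 2*1*y*z := by
    intro x y z hne
    by_contra hle
    push_neg at hle
    have hkm : (0:ℤ) < (k:ℤ)*m := by positivity
    have hsum : (m:ℤ)*((k:ℤ)*x+b₀*y)^2 + ((m:ℤ)*y+(k:ℤ)*z)^2 + (k:ℤ)*z^2 ≤ 0 := by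
      rw [← key x y z]
      exact mul_nonpos_of_nonneg_of_nonpos hkm.le hle
    have t1 : (0:ℤ) ≤ (m:ℤ)*((k:ℤ)*x+b₀*y)^2 := by positivity
    have t2 : (0:ℤ) ≤ ((m:ℤ)*y+(k:ℤ)*z)^2 := sq_nonneg _
    have t3 : (0:ℤ) ≤ (k:ℤ)*z^2 := by positivity
    have hz2 : (k:ℤ)*z^2 = 0 := le_antisymm (by linarith) t3
    have hz : z = 0 := by
      have : z^2 = 0 := by
        rcases mul_eq_zero.mp hz2 with h | h
        · exact absurd h (by positivity)
        · exact h
      exact pow_eq_zero_iff (by norm_num) |>.mp this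
    subst hz
    have hy2 : ((m:ℤ)*y+(k:ℤ)*0)^2 = 0 := le_antisymm (by linarith) t2
    have hy : y = 0 := by
      have h1 : (m:ℤ)*y + (k:ℤ)*0 = 0 := by
        exact pow_eq_zero_iff (by norm_num) |>.mp hy2
      have : (m:ℤ)*y = 0 := by linarith
      rcases mul_eq_zero.mp this with h | h
      · exact absurd h (by positivity)
      · exact h
    subst hy
    have hx2 : (m:ℤ)*((k:ℤ)*x+b₀*0)^2 = 0 := le_antisymm (by linarith) t1
    have hx : x = 0 := by
      rcases mul_eq_zero.mp hx2 with h | h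
      · exact absurd h (by positivity)
      · have h1 : (k:ℤ)*x + b₀*0 = 0 := pow_eq_zero_iff (by norm_num) |>.mp h
        have : (k:ℤ)*x = 0 := by linarith
        rcases mul_eq_zero.mp this with h | h
        · exact absurd h (by positivity)
        · exact h
    exact hne ⟨hx, rfl, rfl⟩
  have hdet : (k:ℤ)*t*(N:ℤ) + 2*b₀*0*1 - (k:ℤ)*1^2 - (N:ℤ)*b₀^2 - t*0^2 = 1 := by
    linear_combination (N:ℤ) * hkt + hNmZ
  obtain ⟨x1, x2, x3, hx⟩ := tern_decomp (k:ℤ) b₀ 0 t 1 (N:ℤ) hpos hdet 0 0 1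
  refine ⟨x1, x2, x3, ?_⟩
  rw [← hx]; ring
-- transfer IsSquare(-N) to IsSquare(-m) mod p, where N*m = k+1, p ∣ k
lemma isSquare_neg_m (p N m k : ℕ) [Fact p.Prime] (hNm : N * m = k + 1)
    (hk : ((k:ℕ) : ZMod p) = 0) (hsqN : IsSquare (-(N : ZMod p))) :
    IsSquare (-(m : ZMod p)) := by
  have h1 : (N : ZMod p) * m = 1 := by
    have h := congrArg (fun n : ℕ => (n : ZMod p)) hNm
    push_cast at h
    rw [hk] at h
    simpa using h
  obtain ⟨s, hs⟩ := hsqN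
  exact ⟨s * m, by linear_combination ((m:ZMod p))^2 * hs + (m : ZMod p) * h1⟩

lemma get_b₀ (p m : ℕ) [Fact p.Prime] (hsq : IsSquare (-(m : ZMod p))) :
    ∃ b₀ : ℤ, (p:ℤ) ∣ b₀^2 + m := by
  obtain ⟨s, hs⟩ := hsq
  refine ⟨(s.val : ℤ), ?_⟩
  rw [← ZMod.intCast_zmod_eq_zero_iff_dvd]
  push_cast
  rw [ZMod.natCast_val, ZMod.cast_id]
  linear_combination -hs

-- case N ≡ 1 (mod 4)
lemma case1 (N : ℕ) (h0 : 0 < N) (hN4 : N % 4 = 1) :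
    ∃ a b c : ℤ, a^2 + b^2 + c^2 = N := by
  have hNodd : N % 2 = 1 := by omega
  have hcop : Nat.Coprime 4 N := by
    have h2 : Nat.Coprime 2 N := by
      unfold Nat.Coprime
      rw [Nat.gcd_rec, hNodd]
      exact Nat.gcd_one_left 2
    simpa using h2.pow_left 2
  obtain ⟨k₀, hk₀4, hk₀N⟩ := Nat.chineseRemainder hcop 1 (N-1)
  haveI : NeZero (4*N) := ⟨by omega⟩
  have hk₀4' : k₀ % 4 = 1 := by
    have := hk₀4; unfold Nat.ModEq at this; omega
  have hunit : IsUnit ((k₀ : ℕ) : ZMod (4*N)) := by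
    rw [ZMod.isUnit_iff_coprime]
    refine Nat.Coprime.mul_right ?_ ?_
    · unfold Nat.Coprime
      rw [Nat.gcd_comm, Nat.gcd_rec]
      simp [hk₀4']
    · obtain ⟨M, rfl⟩ : ∃ M, N = M + 1 := ⟨N-1, by omega⟩
      unfold Nat.Coprime
      rw [Nat.gcd_comm, Nat.gcd_rec]
      have hthis : k₀ % (M+1) = M := by
        have h9 := hk₀N
        unfold Nat.ModEq at h9
        simp only [Nat.add_sub_cancel, Nat.mod_succ] at h9
        exact h9
      rw [hthis, Nat.gcd_comm, Nat.gcd_self_add_left]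
      exact Nat.gcd_one_left M
  obtain ⟨p, hpgt, hpp, hpmod⟩ :=
    Nat.forall_exists_prime_gt_and_eq_mod (q := 4*N) hunit (4*N + 8)
  haveI : Fact p.Prime := ⟨hpp⟩
  have hpmod' : p ≡ k₀ [MOD 4*N] := (ZMod.natCast_eq_natCast_iff p k₀ (4*N)).mp hpmod
  have hp4 : p % 4 = 1 := by
    have h1 : p ≡ k₀ [MOD 4] := hpmod'.of_dvd ⟨N, rfl⟩
    unfold Nat.ModEq at h1; omega
  have hpodd : p % 2 = 1 := by omega
  have hpN : p ≡ N - 1 [MOD N] := by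
    have h1 : p ≡ k₀ [MOD N] := hpmod'.of_dvd ⟨4, by ring⟩
    exact h1.trans hk₀N
  have hdvd : N ∣ p + 1 := by
    have h1 : p + 1 ≡ (N-1) + 1 [MOD N] := hpN.add_right 1
    rw [show N - 1 + 1 = N by omega] at h1
    have h2 : p + 1 ≡ 0 [MOD N] := h1.trans (Nat.modEq_zero_iff_dvd.mpr dvd_rfl)
    exact (Nat.modEq_zero_iff_dvd).mp h2
  -- Jacobi computation : J(-N | p) = 1
  have hOddp : Odd p := Nat.odd_iff.mpr hpodd
  have hOddN : Odd N := Nat.odd_iff.mpr hNodd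
  have hmodN : ((p:ℤ)) % (N:ℤ) = (-1) % (N:ℤ) := by
    have : (N:ℤ) ∣ (-1) - (p:ℤ) := by
      obtain ⟨c, hc⟩ := hdvd
      refine ⟨-c, ?_⟩
      push_cast [hc]
      push_cast at hc
      linarith [hc]
    exact Int.modEq_iff_dvd.mpr this
  have hJ : jacobiSym (-(N:ℤ)) p = 1 := by
    rw [show -(N:ℤ) = -1 * N by ring, jacobiSym.mul_left]
    have h1 : jacobiSym (-1) p = 1 := by
      rw [jacobiSym.at_neg_one hOddp, ZMod.χ₄_nat_eq_if_mod_four]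
      simp [hpodd, hp4]
    have h2 : jacobiSym (N:ℤ) p = 1 := by
      rw [jacobiSym.quadratic_reciprocity hOddN hOddp]
      have hev : Even (N / 2 * (p / 2)) := by
        have : p / 2 % 2 = 0 := by omega
        exact (Nat.even_iff.mpr this).mul_left _
      rw [hev.neg_one_pow, one_mul]
      rw [jacobiSym.mod_left' hmodN, jacobiSym.at_neg_one hOddN,
        ZMod.χ₄_nat_eq_if_mod_four]
      simp [hNodd, hN4]
    rw [h1, h2]; ring
  have hsqN : IsSquare (-(N : ZMod p)) := by
    have := ZMod.isSquare_of_jacobiSym_eq_one hJ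
    push_cast at this
    exact this
  -- build data
  obtain ⟨m, hm⟩ := hdvd
  have hNm : N * m = p + 1 := hm.symm
  have hsqm : IsSquare (-(m : ZMod p)) := by
    refine isSquare_neg_m p N m p hNm ?_ hsqN
    exact_mod_cast ZMod.natCast_self p
  obtain ⟨b₀, hb₀⟩ := get_b₀ p m hsqm
  obtain ⟨t, ht⟩ := hb₀
  exact build N p m (by omega) (by nlinarith [hm]) hNm b₀ t (by linarith [ht])
-- case N ≡ 2 (mod 4)
lemma case2 (N : ℕ) (h0 : 0 < N) (hN4 : N % 4 = 2) :
    ∃ a b c : ℤ, a^2 + b^2 + c^2 = N := by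
  obtain ⟨n₁, hn₁⟩ : ∃ n₁, N = 2 * n₁ := ⟨N/2, by omega⟩
  have hn₁odd : n₁ % 2 = 1 := by omega
  have h0' : 0 < n₁ := by omega
  have hcop : Nat.Coprime 8 n₁ := by
    have h2 : Nat.Coprime 2 n₁ := by
      unfold Nat.Coprime
      rw [Nat.gcd_rec, hn₁odd]
      exact Nat.gcd_one_left 2
    simpa using h2.pow_left 3
  obtain ⟨k₀, hk₀8, hk₀N⟩ := Nat.chineseRemainder hcop 3 (n₁-1)
  haveI : NeZero (8*n₁) := ⟨by omega⟩
  have hk₀8' : k₀ % 8 = 3 := by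
    have h9 := hk₀8; unfold Nat.ModEq at h9; omega
  have hunit : IsUnit ((k₀ : ℕ) : ZMod (8*n₁)) := by
    rw [ZMod.isUnit_iff_coprime]
    refine Nat.Coprime.mul_right ?_ ?_
    · unfold Nat.Coprime
      rw [Nat.gcd_comm, Nat.gcd_rec, hk₀8']
      norm_num
    · obtain ⟨M, rfl⟩ : ∃ M, n₁ = M + 1 := ⟨n₁-1, by omega⟩
      unfold Nat.Coprime
      rw [Nat.gcd_comm, Nat.gcd_rec]
      have hthis : k₀ % (M+1) = M := by
        have h9 := hk₀N
        unfold Nat.ModEq at h9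
        simp only [Nat.add_sub_cancel, Nat.mod_succ] at h9
        exact h9
      rw [hthis, Nat.gcd_comm, Nat.gcd_self_add_left]
      exact Nat.gcd_one_left M
  obtain ⟨p, hpgt, hpp, hpmod⟩ :=
    Nat.forall_exists_prime_gt_and_eq_mod (q := 8*n₁) hunit (8*n₁ + 8)
  haveI : Fact p.Prime := ⟨hpp⟩
  have hpmod' : p ≡ k₀ [MOD 8*n₁] := (ZMod.natCast_eq_natCast_iff p k₀ (8*n₁)).mp hpmod
  have hp8 : p % 8 = 3 := by
    have h1 : p ≡ k₀ [MOD 8] := hpmod'.of_dvd ⟨n₁, rfl⟩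
    unfold Nat.ModEq at h1; omega
  have hpodd : p % 2 = 1 := by omega
  have hpn₁ : p ≡ n₁ - 1 [MOD n₁] := by
    have h1 : p ≡ k₀ [MOD n₁] := hpmod'.of_dvd ⟨8, by ring⟩
    exact h1.trans hk₀N
  have hdvd1 : n₁ ∣ p + 1 := by
    have h1 : p + 1 ≡ (n₁-1) + 1 [MOD n₁] := hpn₁.add_right 1
    rw [show n₁ - 1 + 1 = n₁ by omega] at h1
    have h2 : p + 1 ≡ 0 [MOD n₁] := h1.trans (Nat.modEq_zero_iff_dvd.mpr dvd_rfl)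
    exact (Nat.modEq_zero_iff_dvd).mp h2
  have hdvd : N ∣ p + 1 := by
    rw [hn₁]
    have h2 : Nat.Coprime 2 n₁ := by
      unfold Nat.Coprime
      rw [Nat.gcd_rec, hn₁odd]
      exact Nat.gcd_one_left 2
    exact h2.mul_dvd_of_dvd_of_dvd ⟨(p+1)/2, by omega⟩ hdvd1
  have hOddp : Odd p := Nat.odd_iff.mpr hpodd
  have hOddn₁ : Odd n₁ := Nat.odd_iff.mpr hn₁odd
  have hmodn₁ : ((p:ℤ)) % (n₁:ℤ) = (-1) % (n₁:ℤ) := by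
    have hh : (n₁:ℤ) ∣ (-1) - (p:ℤ) := by
      obtain ⟨c, hc⟩ := hdvd1
      refine ⟨-c, ?_⟩
      push_cast at hc ⊢
      linarith [hc]
    exact Int.modEq_iff_dvd.mpr hh
  have hJ : jacobiSym (-(N:ℤ)) p = 1 := by
    rw [show -(N:ℤ) = -1 * (2 * (n₁:ℤ)) by rw [hn₁]; push_cast; ring,
      jacobiSym.mul_left, jacobiSym.mul_left]
    have h1 : jacobiSym (-1) p = -1 := by
      rw [jacobiSym.at_neg_one hOddp, ZMod.χ₄_nat_eq_if_mod_four]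
      have : p % 4 = 3 := by omega
      simp [hpodd, this]
    have h2 : jacobiSym 2 p = -1 := by
      rw [jacobiSym.at_two hOddp, ZMod.χ₈_nat_eq_if_mod_eight]
      simp [hpodd, hp8]
    have h3 : jacobiSym (n₁:ℤ) p = 1 := by
      rw [jacobiSym.quadratic_reciprocity hOddn₁ hOddp]
      have hrec : jacobiSym (p:ℤ) n₁ = ZMod.χ₄ (n₁ : ZMod 4) := by
        rw [jacobiSym.mod_left' hmodn₁, jacobiSym.at_neg_one hOddn₁]
      have hp2odd : p / 2 % 2 = 1 := by omega
      rcases (by omega : n₁ % 4 = 1 ∨ n₁ % 4 = 3) with h | h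
      · have hev : Even (n₁ / 2 * (p / 2)) := by
          refine Nat.even_mul.mpr (Or.inl (Nat.even_iff.mpr (by omega)))
        rw [hev.neg_one_pow, one_mul, hrec, ZMod.χ₄_nat_eq_if_mod_four]
        simp [hn₁odd, h]
      · have hodd : Odd (n₁ / 2 * (p / 2)) :=
          (Nat.odd_iff.mpr (by omega)).mul (Nat.odd_iff.mpr hp2odd)
        rw [hodd.neg_one_pow, hrec, ZMod.χ₄_nat_eq_if_mod_four]
        have : ¬ (n₁ % 4 = 1) := by omega
        simp [hn₁odd, this]
    rw [h1, h2, h3]; ring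
  have hsqN : IsSquare (-(N : ZMod p)) := by
    have := ZMod.isSquare_of_jacobiSym_eq_one hJ
    push_cast at this
    exact this
  obtain ⟨m, hm⟩ := hdvd
  have hNm : N * m = p + 1 := hm.symm
  have hsqm : IsSquare (-(m : ZMod p)) := by
    refine isSquare_neg_m p N m p hNm ?_ hsqN
    exact_mod_cast ZMod.natCast_self p
  obtain ⟨b₀, hb₀⟩ := get_b₀ p m hsqm
  obtain ⟨t, ht⟩ := hb₀
  exact build N p m (by omega) (by nlinarith [hm]) hNm b₀ t (by linarith [ht])

-- case N ≡ 3 (mod 8)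
lemma case3 (N : ℕ) (h0 : 0 < N) (hN8 : N % 8 = 3) :
    ∃ a b c : ℤ, a^2 + b^2 + c^2 = N := by
  have hNodd : N % 2 = 1 := by omega
  have hN4 : N % 4 = 3 := by omega
  haveI : NeZero N := ⟨by omega⟩
  have hOddN : Odd N := Nat.odd_iff.mpr hNodd
  have hunit : IsUnit (((N-1)/2 : ℕ) : ZMod N) := by
    rw [ZMod.isUnit_iff_coprime]
    have hd1 : (N-1)/2 ∣ N - 1 := Nat.div_dvd_of_dvd ⟨(N-1)/2, by omega⟩
    refine Nat.Coprime.coprime_dvd_left hd1 ?_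
    obtain ⟨M, rfl⟩ : ∃ M, N = M + 1 := ⟨N-1, by omega⟩
    simp only [Nat.add_sub_cancel]
    unfold Nat.Coprime
    rw [Nat.gcd_comm, Nat.gcd_self_add_left]
    exact Nat.gcd_one_left M
  obtain ⟨p, hpgt, hpp, hpmod⟩ :=
    Nat.forall_exists_prime_gt_and_eq_mod (q := N) hunit (2*N + 8)
  haveI : Fact p.Prime := ⟨hpp⟩
  have hpN : p ≡ (N-1)/2 [MOD N] := (ZMod.natCast_eq_natCast_iff p _ N).mp hpmod
  have hpodd : p % 2 = 1 := by
    rcases hpp.eq_two_or_odd with h | h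
    · omega
    · exact h
  have hdvd : N ∣ 2*p + 1 := by
    have h1 : 2*p ≡ 2*((N-1)/2) [MOD N] := hpN.mul_left 2
    rw [Nat.mul_div_cancel' ⟨(N-1)/2, by omega⟩] at h1
    have h2 : 2*p + 1 ≡ (N-1) + 1 [MOD N] := h1.add_right 1
    rw [show N - 1 + 1 = N by omega] at h2
    have h3 : 2*p + 1 ≡ 0 [MOD N] := h2.trans (Nat.modEq_zero_iff_dvd.mpr dvd_rfl)
    exact (Nat.modEq_zero_iff_dvd).mp h3
  have hOddp : Odd p := Nat.odd_iff.mpr hpodd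
  have hmod2p : ((2*p:ℕ):ℤ) % (N:ℤ) = (-1) % (N:ℤ) := by
    have hh : (N:ℤ) ∣ (-1) - ((2*p:ℕ):ℤ) := by
      obtain ⟨c, hc⟩ := hdvd
      refine ⟨-c, ?_⟩
      push_cast at hc ⊢
      linarith [hc]
    exact Int.modEq_iff_dvd.mpr hh
  have hχ2 : jacobiSym 2 N = -1 := by
    rw [jacobiSym.at_two hOddN, ZMod.χ₈_nat_eq_if_mod_eight]
    simp [hNodd, hN8]
  have hχ4 : jacobiSym (-1) N = -1 := by
    rw [jacobiSym.at_neg_one hOddN, ZMod.χ₄_nat_eq_if_mod_four]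
    have : ¬ (N % 4 = 1) := by omega
    simp [hNodd, this]
  have hJpN : jacobiSym (p:ℤ) N = 1 := by
    have e1 : jacobiSym ((4:ℤ)*p) N = jacobiSym 4 N * jacobiSym (p:ℤ) N :=
      jacobiSym.mul_left 4 (p:ℤ) N
    have e4 : jacobiSym (4:ℤ) N = 1 := by
      rw [show (4:ℤ) = 2*2 by norm_num, jacobiSym.mul_left, hχ2]; ring
    have e2 : jacobiSym ((4:ℤ)*p) N = jacobiSym 2 N * jacobiSym ((2*p:ℕ):ℤ) N := by
      rw [show ((4:ℤ)*p) = 2*((2*p:ℕ):ℤ) by push_cast; ring, jacobiSym.mul_left]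
    have e3 : jacobiSym ((2*p:ℕ):ℤ) N = -1 := by
      rw [jacobiSym.mod_left' hmod2p, hχ4]
    rw [e4, one_mul] at e1
    rw [e3, hχ2] at e2
    rw [e1] at e2
    linarith [e2]
  have hJ : jacobiSym (-(N:ℤ)) p = 1 := by
    rw [show -(N:ℤ) = -1 * N by ring, jacobiSym.mul_left]
    have h1 : jacobiSym (-1) p = ZMod.χ₄ (p : ZMod 4) := jacobiSym.at_neg_one hOddp
    have h2 : jacobiSym (N:ℤ) p = (-1)^(N/2 * (p/2)) * jacobiSym (p:ℤ) N :=
      jacobiSym.quadratic_reciprocity hOddN hOddp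
    rw [h2, hJpN, mul_one, h1, ZMod.χ₄_nat_eq_if_mod_four]
    have hN2odd : N / 2 % 2 = 1 := by omega
    rcases (by omega : p % 4 = 1 ∨ p % 4 = 3) with h | h
    · have hev : Even (N / 2 * (p / 2)) :=
        Nat.even_mul.mpr (Or.inr (Nat.even_iff.mpr (by omega)))
      rw [hev.neg_one_pow]
      simp [hpodd, h]
    · have hodd : Odd (N / 2 * (p / 2)) :=
        (Nat.odd_iff.mpr hN2odd).mul (Nat.odd_iff.mpr (by omega))
      rw [hodd.neg_one_pow]
      have : ¬ (p % 4 = 1) := by omega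
      simp [hpodd, this]
  have hsqN : IsSquare (-(N : ZMod p)) := by
    have := ZMod.isSquare_of_jacobiSym_eq_one hJ
    push_cast at this
    exact this
  obtain ⟨m, hm⟩ := hdvd
  have hNm : N * m = 2*p + 1 := hm.symm
  have hsqm : IsSquare (-(m : ZMod p)) := by
    refine isSquare_neg_m p N m (2*p) hNm ?_ hsqN
    push_cast [ZMod.natCast_self p]
    ring
  obtain ⟨b₀, hb₀⟩ := get_b₀ p m hsqm
  -- adjust parity of b₀
  have hb₁ : ∃ b₁ : ℤ, ((p:ℤ) ∣ b₁^2 + m) ∧ ((2:ℤ) ∣ b₁^2 + m) := by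
    obtain ⟨t₀, ht₀⟩ := hb₀
    by_cases hpar : (b₀ + m) % 2 = 0
    · refine ⟨b₀, ⟨t₀, ht₀⟩, ?_⟩
      have h1 := parity_sq b₀
      omega
    · refine ⟨b₀ + p, ⟨t₀ + 2*b₀ + p, by push_cast; linarith [ht₀]⟩, ?_⟩
      have h1 := parity_sq (b₀ + (p:ℤ))
      have h2 : (p:ℤ) % 2 = 1 := by omega
      omega
  obtain ⟨b₁, hpd, h2d⟩ := hb₁
  have hcop2p : IsCoprime (2:ℤ) (p:ℤ) := by
    rw [Int.isCoprime_iff_gcd_eq_one]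
    have h1 : Int.gcd 2 (p:ℤ) = Nat.gcd 2 p := by simp [Int.gcd]
    rw [h1, Nat.gcd_rec, hpodd]
    exact Nat.gcd_one_left 2
  have hdvd2p : ((2*p : ℕ):ℤ) ∣ b₁^2 + m := by
    push_cast
    exact hcop2p.mul_dvd h2d hpd
  obtain ⟨t, ht⟩ := hdvd2p
  refine build N (2*p) m (by omega) (by nlinarith [hm]) hNm b₁ t (by linarith [ht])

lemma exists_three_sq_aux (N : ℕ) (h0 : 0 < N) (h4 : N % 4 ≠ 0) (h8 : N % 8 ≠ 7) :
    ∃ a b c : ℤ, a^2 + b^2 + c^2 = N := by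
  rcases (by omega : N % 4 = 1 ∨ N % 4 = 2 ∨ N % 4 = 3) with h | h | h
  · exact case1 N h0 h
  · exact case2 N h0 h
  · exact case3 N h0 (by omega)

lemma three_sq (N : ℕ) (h0 : 0 < N) (h : ¬ ∃ k m : ℕ, N = 4^k * (8*m+7)) :
    ∃ a b c : ℤ, a^2 + b^2 + c^2 = N := by
  induction N using Nat.strong_induction_on with
  | _ N ih =>
  by_cases h4 : N % 4 = 0
  · obtain ⟨N', rfl⟩ : ∃ N', N = 4 * N' := ⟨N / 4, by omega⟩
    have h0' : 0 < N' := by omega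
    have h' : ¬ ∃ k m : ℕ, N' = 4^k * (8*m+7) := by
      rintro ⟨k, m, rfl⟩
      exact h ⟨k+1, m, by ring⟩
    obtain ⟨a, b, c, habc⟩ := ih N' (by omega) h0' h'
    refine ⟨2*a, 2*b, 2*c, ?_⟩
    push_cast
    push_cast at habc
    linear_combination 4 * habc
  · have h8 : N % 8 ≠ 7 := by
      intro h8
      refine h ⟨0, N / 8, ?_⟩
      simp only [pow_zero, one_mul]
      omega
    exact exists_three_sq_aux N h0 h4 h8

/-- Dixon's theorem: for even positive `v`, `v = p² + 2q² + r²` is solvable in integers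
iff `v` is not of the form `2^(2k+1)(8m+7)`. -/
theorem stmt4 (v : ℕ) (hv : 0 < v) (heven : Even v) :
    (∃ p q r : ℤ, p ^ 2 + 2 * q ^ 2 + r ^ 2 = v) ↔
      ¬∃ k m : ℕ, v = 2 ^ (2 * k + 1) * (8 * m + 7) := by
  constructor
  · rintro ⟨p, q, r, h⟩ ⟨k, m, hv'⟩
    refine not_three_sq (k+1) m ⟨p+r, p-r, 2*q, ?_⟩
    have h3 : ((4:ℕ))^(k+1) * (8*m+7) = 2 * v := by
      rw [hv', show (4:ℕ)^(k+1) = 2^(2*(k+1)) by rw [pow_mul]; norm_num,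
        show 2*(k+1) = (2*k+1)+1 by ring, pow_succ]
      ring
    have h2 : ((4:ℕ)^(k+1) * (8*m+7) : ℤ) = 2 * (p ^ 2 + 2 * q ^ 2 + r ^ 2) := by
      rw [h]
      exact_mod_cast congrArg (Nat.cast : ℕ → ℤ) h3
    push_cast at h2 ⊢
    linear_combination -h2
  · intro hn
    have h2v : ¬ ∃ k m : ℕ, 2 * v = 4^k * (8*m+7) := by
      rintro ⟨k, m, hkm⟩
      match k with
      | 0 =>
        simp only [pow_zero, one_mul] at hkm; omega
      | k+1 =>
        refine hn ⟨k, m, ?_⟩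
        have h5 : (4:ℕ)^(k+1) = 2 * 2^(2*k+1) := by
          rw [show (4:ℕ)^(k+1) = 2^(2*(k+1)) by rw [pow_mul]; norm_num,
            show 2*(k+1) = (2*k+1)+1 by ring, pow_succ]
          ring
        rw [h5, mul_assoc] at hkm
        exact Nat.eq_of_mul_eq_mul_left (by norm_num) hkm
    obtain ⟨a, b, c, habc⟩ := three_sq (2*v) (by omega) h2v
    push_cast at habc
    have hpar : (Even c ∧ Even (a+b)) ∨ (Even a ∧ Even (b+c)) ∨ (Even b ∧ Even (a+c)) := by
      have h2 : (a^2+b^2+c^2) % 2 = 0 := by rw [habc]; omega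
      have ha2 := parity_sq a; have hb2 := parity_sq b; have hc2 := parity_sq c
      simp only [Int.even_iff, Int.even_add]
      omega
    have key : ∀ x y z : ℤ, Even z → Even (x+y) → x^2+y^2+z^2 = 2*(v:ℤ) →
        ∃ p q r : ℤ, p ^ 2 + 2 * q ^ 2 + r ^ 2 = (v:ℤ) := by
      intro x y z hz hxy hs
      obtain ⟨q, hq⟩ := hz
      obtain ⟨p, hp⟩ := hxy
      have hxy2 : Even (x - y) := ⟨p - y, by omega⟩
      obtain ⟨r, hr⟩ := hxy2
      refine ⟨p, q, r, ?_⟩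
      have hx : x = p + r := by omega
      have hy : y = p - r := by omega
      have hzz : z = q + q := hq
      rw [hx, hy, hzz] at hs
      have h' : 2*(p^2+2*q^2+r^2) = 2*(v:ℤ) := by linear_combination hs
      linarith
    rcases hpar with ⟨h1, h2⟩ | ⟨h1, h2⟩ | ⟨h1, h2⟩
    · exact key a b c h1 h2 habc
    · exact key b c a h1 h2 (by linarith)
    · exact key a c b h1 h2 (by linarith)
end

section
/- Let X_1, X_2, X_3, X_4 be subsets of Z_v and let A_1, A_2, A_3, A_4 be the associated ±1-sequences (with (A_j)_i = -1 iff i ∈ X_j). Then (X_1, X_2, X_3, X_4) is a difference family with parameters (v; k_1, k_2, k_3, k_4; λ) where λ = k_1 + k_2 + k_3 + k_4 - v if and only if ∑_{j=1}^{4} paf_{A_j}(s) = 0 for all nonzero s ∈ Z_v. -/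
/-!
Writing the `±1`-sequence of `X` as `1 - 2·𝟙_X`, the autocorrelation at shift `s` expands to
`|G| - 4|X| + 4 λ_X(s)`, where `λ_X(s)` counts the pairs of `X` with difference `s`. Summing over
the four blocks, `∑ⱼ paf_{Aⱼ}(s) = 4 (∑ⱼ λ_{Xⱼ}(s) - (∑ⱼ kⱼ - v))`, so the two conditions coincide.
-/

open Finset

def paf {G : Type*} [Add G] [Fintype G] (a : G → ℤ) (s : G) : ℤ := ∑ i, a i * a (i + s)

variable {G : Type*} [DecidableEq G]

def pmOneSeq (X : Finset G) (i : G) : ℤ := if i ∈ X then -1 else 1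

lemma pmOneSeq_mul_pmOneSeq (X : Finset G) (i j : G) :
    pmOneSeq X i * pmOneSeq X j = 1 - 2 * (if i ∈ X then 1 else 0) - 2 * (if j ∈ X then 1 else 0)
      + 4 * ((if i ∈ X then 1 else 0) * if j ∈ X then 1 else 0) := by
  unfold pmOneSeq
  split_ifs <;> norm_num

variable [AddCommGroup G]

lemma card_filter_sub_eq_card_filter_add_mem (X : Finset G) (s : G) :
    #{p ∈ X ×ˢ X | p.1 - p.2 = s} = #{i ∈ X | i + s ∈ X} := by
  refine card_nbij' Prod.snd (fun i => (i + s, i)) ?_ ?_ ?_ ?_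
  · rintro ⟨a, b⟩ h
    simp only [coe_filter, mem_product, Set.mem_ofPred_eq] at h ⊢
    obtain ⟨⟨ha, hb⟩, rfl⟩ := h
    simpa using And.intro hb ha
  · intro i h
    simp only [coe_filter, mem_product, Set.mem_ofPred_eq] at h ⊢
    exact ⟨⟨h.2, h.1⟩, add_sub_cancel_left i s⟩
  · rintro ⟨a, b⟩ h
    simp only [coe_filter, mem_product, Set.mem_ofPred_eq] at h
    simp [← h.2]
  · intro i _
    rfl

variable [Fintype G]

lemma paf_pmOneSeq (X : Finset G) (s : G) :
    paf (pmOneSeq X) s = Fintype.card G - 4 * #X + 4 * #{p ∈ X ×ˢ X | p.1 - p.2 = s} := by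
  have hshift : ∑ i : G, (if i + s ∈ X then (1 : ℤ) else 0) = #X :=
    (Fintype.sum_equiv (Equiv.addRight s) _ (fun i => if i ∈ X then (1 : ℤ) else 0)
      fun _ => rfl).trans (by simp)
  have hpairs : ∑ i : G, (if i ∈ X then (1 : ℤ) else 0) * (if i + s ∈ X then 1 else 0)
      = #{p ∈ X ×ˢ X | p.1 - p.2 = s} := by
    simp only [card_filter_sub_eq_card_filter_add_mem, ite_zero_mul_ite_zero, mul_one, sum_boole,
      filter_and, filter_mem_eq_inter, univ_inter]
    rw [inter_filter, inter_univ]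
  simp only [paf, pmOneSeq_mul_pmOneSeq, sum_add_distrib, sum_sub_distrib, ← mul_sum, hshift,
    hpairs, sum_const, card_univ, Int.nsmul_eq_mul, mul_one, sum_ite_mem, univ_inter]
  ring

/-- Four subsets of `Z_v` form a difference family with `λ = k₁+k₂+k₃+k₄-v` iff
the periodic autocorrelation functions of their associated `±1`-sequences sum to zero
at every nonzero shift. -/
theorem stmt11 (v : ℕ) [NeZero v] (X : Fin 4 → Finset (ZMod v)) :
    (∀ s : ZMod v, s ≠ 0 →
        (∑ j : Fin 4, (((X j) ×ˢ (X j)).filter (fun p => p.1 - p.2 = s)).card : ℤ) =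
          (∑ j : Fin 4, ((X j).card : ℤ)) - v) ↔
      (∀ s : ZMod v, s ≠ 0 →
        ∑ j : Fin 4, ∑ i : ZMod v,
          (if i ∈ X j then (-1 : ℤ) else 1) * (if i + s ∈ X j then (-1 : ℤ) else 1) = 0) := by
  have hpaf (s : ZMod v) : ∑ j : Fin 4, paf (pmOneSeq (X j)) s
      = 4 * ((∑ j : Fin 4, (#{p ∈ X j ×ˢ X j | p.1 - p.2 = s} : ℤ))
          - ((∑ j : Fin 4, (#(X j) : ℤ)) - v)) := by
    simp only [paf_pmOneSeq, ZMod.card, Fin.sum_univ_four]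
    ring
  refine forall₂_congr fun s _ => ?_
  change _ ↔ ∑ j : Fin 4, paf (pmOneSeq (X j)) s = 0
  rw [hpaf, mul_eq_zero, sub_eq_zero]
  norm_num
end

section
/- Let C_1, C_2, C_3, C_4 be circulant ±1-matrices of order v whose associated first-row sequences have periodic autocorrelation functions summing to zero at every nonzero shift, and let R be the back-circulant identity matrix (R_{ij} = 1 iff i + j ≡ v - 1 mod v, with 0-based indexing). Then the 4v × 4v block matrix H with rows of blocks [C_1, C_2R, C_3R, C_4R; -C_2R, C_1, -RC_4, RC_3; -C_3R, RC_4, C_1, -RC_2; -C_4R, -RC_3, RC_2, C_1] satisfies H H^T = 4v I_{4v}. -/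
/-!
Circulant matrices over `ZMod v` commute with each other and with their transposes, and the
back-identity `R` satisfies `R² = 1`, `Rᵀ = R` and `R Cᵀ = C R` for every circulant `C`. In any
ring with involution these relations alone make the Goethals–Seidel array `G` satisfy
`G G* = diag(∑ Aⱼ Aⱼ*)`: the off-diagonal entries cancel in pairs. Reading `H` as a `4 × 4` matrix
whose entries are `v × v` matrices, `H Hᵀ` is therefore block diagonal with blocks `∑ Cⱼ Cⱼᵀ`,
whose `(i, k)` entry is `∑ⱼ paf_{aⱼ}(i - k)`, that is `4v` on the diagonal and `0` off it.
-/

open Matrix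

namespace Matrix

section GoethalsSeidel

variable {S : Type*} [Ring S]

def goethalsSeidelArray (A : Fin 4 → S) (r : S) : Matrix (Fin 4) (Fin 4) S :=
  !![A 0, A 1 * r, A 2 * r, A 3 * r;
     -(A 1 * r), A 0, -(r * A 3), r * A 2;
     -(A 2 * r), r * A 3, A 0, -(r * A 1);
     -(A 3 * r), -(r * A 2), r * A 1, A 0]

theorem goethalsSeidelArray_mul_conjTranspose [StarRing S] (A : Fin 4 → S) (r : S)
    (hcomm : ∀ i j, Commute (A i) (A j)) (hcomm_star : ∀ i j, Commute (A i) (star (A j)))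
    (hr : r * r = 1) (hr_self : IsSelfAdjoint r) (hrA : ∀ i, r * A i = star (A i) * r) :
    goethalsSeidelArray A r * (goethalsSeidelArray A r)ᴴ =
      diagonal fun _ => ∑ j, A j * star (A j) := by
  have hrA_star (i : Fin 4) : r * star (A i) = A i * r := by
    calc r * star (A i) = r * (star (A i) * r) * r := by rw [mul_assoc, mul_assoc, hr, mul_one]
      _ = A i * r := by rw [← hrA, ← mul_assoc, hr, one_mul]
  have hrA_left (i : Fin 4) (X : S) : r * (A i * X) = star (A i) * (r * X) := by
    rw [← mul_assoc, hrA, mul_assoc]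
  have hrA_star_left (i : Fin 4) (X : S) : r * (star (A i) * X) = A i * (r * X) := by
    rw [← mul_assoc, hrA_star, mul_assoc]
  -- Once every `r` is pushed to the right, each product is a word in the pairwise commuting
  -- `A i`, `star (A j)`; these oriented relations bring such words to a normal form.
  have hsort (i j : Fin 4) (_ : i < j) : A j * A i = A i * A j := (hcomm j i).eq
  have hsort_star (i j : Fin 4) (_ : i < j) :
      star (A j) * star (A i) = star (A i) * star (A j) := by
    rw [← star_mul, ← star_mul, (hcomm i j).eq]
  have hsort_mixed (i j : Fin 4) : star (A j) * A i = A i * star (A j) := (hcomm_star i j).eq.symm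
  ext x y
  fin_cases x <;> fin_cases y <;>
    simp only [goethalsSeidelArray, of_apply, cons_val', cons_val, cons_val_zero, cons_val_one,
      cons_val_fin_one, Fin.isValue, Fin.mk_one, Fin.zero_eta, Fin.reduceFinMk, Fin.reduceEq,
      mul_apply, conjTranspose_apply, Fin.sum_univ_four, diagonal_apply_eq, diagonal_apply_ne,
      ne_eq, not_false_eq_true, one_ne_zero, zero_ne_one, star_mul, star_neg, star_star,
      hr_self.star_eq, mul_neg, neg_mul, neg_neg, mul_one, mul_assoc, hr, hrA, hrA_star, hrA_left,
      hrA_star_left] <;>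
    simp only [← mul_assoc, hsort, hsort_star, hsort_mixed, Fin.reduceLT] <;>
    abel

end GoethalsSeidel

theorem comp_diagonal_smul_one {I J R : Type*} [DecidableEq I] [DecidableEq J] [Semiring R]
    (k : R) : comp I I J J R (diagonal fun _ => k • (1 : Matrix J J R)) = k • 1 := by
  ext ⟨x, i⟩ ⟨y, j⟩
  by_cases hxy : x = y <;>
    simp only [comp_apply, diagonal_apply, smul_apply, one_apply, Prod.mk.injEq, hxy, if_true,
      if_false, true_and, false_and, zero_apply, smul_zero]

variable {n α : Type*} [AddCommGroup n] [DecidableEq n]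

def backIdentity [Zero α] [One α] (c : n) : Matrix n n α :=
  of fun i j => if i + j = c then 1 else 0

theorem transpose_backIdentity [Zero α] [One α] (c : n) :
    (backIdentity c : Matrix n n α)ᵀ = backIdentity c := by
  ext i j
  simp only [backIdentity, transpose_apply, of_apply, add_comm]

section
variable [Fintype n] [NonAssocSemiring α] (c : n)

theorem backIdentity_mul_apply (M : Matrix n n α) (i k : n) :
    ((backIdentity c : Matrix n n α) * M) i k = M (c - i) k := by
  simp [backIdentity, mul_apply, ← eq_sub_iff_add_eq']

theorem mul_backIdentity_apply (M : Matrix n n α) (i k : n) :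
    (M * (backIdentity c : Matrix n n α)) i k = M i (c - k) := by
  simp [backIdentity, mul_apply, ← eq_sub_iff_add_eq]

theorem backIdentity_mul_self : (backIdentity c : Matrix n n α) * backIdentity c = 1 := by
  ext i k
  rw [backIdentity_mul_apply]
  simp only [backIdentity, of_apply, one_apply]
  grind

theorem backIdentity_mul_transpose_circulant (w : n → α) :
    (backIdentity c : Matrix n n α) * (circulant w)ᵀ = circulant w * backIdentity c := by
  ext i k
  rw [backIdentity_mul_apply, mul_backIdentity_apply, transpose_apply, circulant_apply,
    circulant_apply]
  congr 1
  abel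

end

def periodicAutocorrelation {G : Type*} [Add G] [Fintype G] [Mul α] [AddCommMonoid α]
    (f : G → α) (s : G) : α :=
  ∑ i, f i * f (i + s)

theorem periodicAutocorrelation_zero {G : Type*} [AddZeroClass G] [Fintype G]
    [NonAssocSemiring α] (f : G → α) (hf : ∀ i, f i * f i = 1) :
    periodicAutocorrelation f 0 = Fintype.card G := by
  simp [periodicAutocorrelation, hf]

section
variable [Fintype n]

omit [DecidableEq n] in
theorem transpose_circulant_mul_circulant_apply [NonUnitalNonAssocSemiring α] (w : n → α)
    (i k : n) : ((circulant w)ᵀ * circulant w) i k = periodicAutocorrelation w (i - k) := by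
  simp only [mul_apply, transpose_apply, circulant_apply, periodicAutocorrelation]
  refine Fintype.sum_equiv (Equiv.subRight i) _ _ fun m => ?_
  simp only [Equiv.subRight_apply]
  congr 2
  abel

theorem sum_transpose_circulant_mul_circulant [NonAssocSemiring α] {ι : Type*}
    [Fintype ι] (a : ι → n → α) (hpm : ∀ j i, a j i * a j i = 1)
    (hpaf : ∀ s ≠ 0, ∑ j, periodicAutocorrelation (a j) s = 0) :
    ∑ j, (circulant (a j))ᵀ * circulant (a j) =
      ((Fintype.card ι * Fintype.card n : ℕ) : α) • (1 : Matrix n n α) := by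
  ext i k
  simp only [sum_apply, transpose_circulant_mul_circulant_apply, smul_apply, one_apply]
  obtain rfl | hik := eq_or_ne i k
  · simp [periodicAutocorrelation_zero _ (hpm _)]
  · simp [hik, hpaf (i - k) (sub_ne_zero.2 hik)]

end

end Matrix

open Matrix

/-- The Goethals–Seidel array built from four circulant `±1`-matrices whose
periodic autocorrelations sum to zero yields a Hadamard matrix: `H Hᵀ = 4v I`. -/
theorem stmt12 (v : ℕ) [NeZero v] (a : Fin 4 → ZMod v → ℤ)
    (hpm : ∀ j i, a j i = 1 ∨ a j i = -1)
    (hpaf : ∀ s : ZMod v, s ≠ 0 → ∑ j : Fin 4, ∑ i : ZMod v, a j i * a j (i + s) = 0)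
    (C : Fin 4 → Matrix (ZMod v) (ZMod v) ℤ)
    (hC : ∀ j i k, C j i k = a j (k - i))
    (R : Matrix (ZMod v) (ZMod v) ℤ)
    (hR : ∀ i j, R i j = if i + j = -1 then 1 else 0)
    (H : Matrix (Fin 4 × ZMod v) (Fin 4 × ZMod v) ℤ)
    (hH : ∀ p q : Fin 4 × ZMod v, H p q =
      (![![C 0, C 1 * R, C 2 * R, C 3 * R],
         ![-(C 1 * R), C 0, -(R * C 3), R * C 2],
         ![-(C 2 * R), R * C 3, C 0, -(R * C 1)],
         ![-(C 3 * R), -(R * C 2), R * C 1, C 0]] p.1 q.1) p.2 q.2) :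
    H * H.transpose = (4 * (v : ℤ)) • (1 : Matrix (Fin 4 × ZMod v) (Fin 4 × ZMod v) ℤ) := by
  have hC' (j : Fin 4) : C j = (circulant (a j))ᵀ := by
    ext i k
    rw [hC, transpose_apply, circulant_apply]
  have hstar (j : Fin 4) : star (C j) = circulant (a j) := by
    rw [star_eq_conjTranspose, conjTranspose_eq_transpose_of_trivial, hC', transpose_transpose]
  have hR' : R = backIdentity (-1) := by
    ext i j
    rw [hR, backIdentity, of_apply]
  have hH' : H = comp _ _ _ _ ℤ (goethalsSeidelArray C R) := by
    ext p q
    exact hH p q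
  have hsum : ∑ j, C j * star (C j) = (4 * (v : ℤ)) • (1 : Matrix (ZMod v) (ZMod v) ℤ) := by
    simp_rw [hstar, hC']
    rw [sum_transpose_circulant_mul_circulant a ?_ hpaf]
    · simp
    · intro j i
      rcases hpm j i with h | h <;> simp [h]
  have hGS := goethalsSeidelArray_mul_conjTranspose C R
    (fun i j => by simp only [hC', transpose_circulant]; exact circulant_mul_comm _ _)
    (fun i j => by rw [hstar, hC', transpose_circulant]; exact circulant_mul_comm _ _)
    (by rw [hR', backIdentity_mul_self])
    (by rw [hR', IsSelfAdjoint, star_eq_conjTranspose, conjTranspose_eq_transpose_of_trivial,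
      transpose_backIdentity])
    (fun i => by rw [hstar, hR', hC', backIdentity_mul_transpose_circulant])
  rw [← conjTranspose_eq_transpose_of_trivial, hH', conjTranspose_comp', ← compRingEquiv_apply,
    ← compRingEquiv_apply, ← map_mul, hGS, hsum, compRingEquiv_apply, comp_diagonal_smul_one]
end

section
/- Under the same hypotheses as the Goethals–Seidel construction, the 4v × 4v block matrix P = [-C_1, C_2R, C_3R, C_4R; C_3R, RC_4, C_1, -RC_2; C_2R, C_1, -RC_4, RC_3; C_4R, -RC_3, RC_2, C_1] (the Propus array) satisfies P P^T = 4v I_{4v}, i.e., P is a Hadamard matrix of order 4v. -/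
/-!
Circulant matrices commute, the back identity `R` satisfies `Rᵀ = R`, `R R = 1` and
`R C = Cᵀ R` for every circulant `C`, so in each off-diagonal block of `P Pᵀ` the four
products cancel in pairs, while every diagonal block equals `∑ Cᵢ Cᵢᵀ`. The `(x, y)` entry
of `∑ Cᵢ Cᵢᵀ` is the sum of the periodic autocorrelations at shift `x - y`: this is `4v` for
`x = y` because the entries are `±1`, and `0` otherwise by hypothesis.
-/

open Matrix

namespace Propus

variable {n α : Type*} [AddCommGroup n] [CommRing α]

section BackIdentity

variable [DecidableEq n]

variable (α) in
def backIdentity (t : n) : Matrix n n α := of fun i j => if i + j = t then 1 else 0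

variable (t : n)

lemma transpose_backIdentity : (backIdentity α t)ᵀ = backIdentity α t := by
  ext i k; simp [backIdentity, add_comm]

variable [Fintype n]

lemma backIdentity_mul_apply (M : Matrix n n α) (i k : n) :
    (backIdentity α t * M) i k = M (t - i) k := by
  simp [backIdentity, mul_apply, ← eq_sub_iff_add_eq']

lemma mul_backIdentity_apply (M : Matrix n n α) (i k : n) :
    (M * backIdentity α t) i k = M i (t - k) := by
  simp [backIdentity, mul_apply, ← eq_sub_iff_add_eq]

lemma backIdentity_mul_self : backIdentity α t * backIdentity α t = 1 := by
  ext i k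
  rw [backIdentity_mul_apply, backIdentity, of_apply, one_apply]
  exact if_congr (by rw [sub_add_eq_add_sub, sub_eq_iff_eq_add, add_left_cancel_iff, eq_comm])
    rfl rfl

lemma backIdentity_mul_circulant (c : n → α) :
    backIdentity α t * circulant c = circulant (fun i => c (-i)) * backIdentity α t := by
  ext i k
  rw [backIdentity_mul_apply, mul_backIdentity_apply, circulant_apply, circulant_apply]
  congr 1; abel

lemma backIdentity_mul_circulant_mul (c : n → α) (M : Matrix n n α) :
    backIdentity α t * (circulant c * M) =
      circulant (fun i => c (-i)) * (backIdentity α t * M) := by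
  rw [← Matrix.mul_assoc, backIdentity_mul_circulant, Matrix.mul_assoc]

end BackIdentity

lemma circulant_mul_left_comm [Fintype n] (c d : n → α) (M : Matrix n n α) :
    circulant c * (circulant d * M) = circulant d * (circulant c * M) := by
  rw [← Matrix.mul_assoc, circulant_mul_comm, Matrix.mul_assoc]

/-- `C 0, …, C 3` play the roles of `C₁, …, C₄`. -/
def propusArray {A : Type*} [Ring A] (C : Fin 4 → A) (R : A) : Matrix (Fin 4) (Fin 4) A :=
  !![-(C 0), C 1 * R, C 2 * R, C 3 * R;
     C 2 * R, R * C 3, C 0, -(R * C 1);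
     C 1 * R, C 0, -(R * C 3), R * C 2;
     C 3 * R, -(R * C 2), R * C 1, C 0]

theorem propusArray_mul_transpose_map_transpose [Fintype n] [DecidableEq n]
    (c : Fin 4 → n → α) (t : n) :
    let P := propusArray (fun i => circulant (c i)) (backIdentity α t)
    P * Pᵀ.map transpose = diagonal fun _ => ∑ i, circulant (c i) * (circulant (c i))ᵀ := by
  refine Matrix.ext fun j k => ?_
  rw [mul_apply, diagonal_apply]
  fin_cases j <;> fin_cases k <;>
    simp [propusArray, Fin.sum_univ_four, transpose_mul, transpose_backIdentity,
      transpose_circulant, Matrix.mul_assoc, backIdentity_mul_circulant,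
      backIdentity_mul_circulant_mul, backIdentity_mul_self, circulant_mul_comm,
      circulant_mul_left_comm] <;> abel_nf

section Autocorrelation

variable [Fintype n]

def periodicAutocorrelation (a : n → α) (s : n) : α := ∑ i, a i * a (i + s)

lemma periodicAutocorrelation_zero {a : n → α} (ha : ∀ i, a i = 1 ∨ a i = -1) :
    periodicAutocorrelation a 0 = Fintype.card n := by
  have hsq : ∀ i, a i * a i = 1 := fun i => by
    rcases ha i with h | h <;> simp [h]
  simp [periodicAutocorrelation, hsq]

lemma circulant_neg_mul_transpose_apply (a : n → α) (x y : n) :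
    (circulant (fun i => a (-i)) * (circulant fun i => a (-i))ᵀ) x y =
      periodicAutocorrelation a (x - y) := by
  simp only [mul_apply, transpose_apply, circulant_apply, periodicAutocorrelation]
  exact Fintype.sum_equiv (Equiv.subRight x) _ _ fun z => by
    rw [Equiv.subRight_apply, neg_sub, neg_sub, sub_add_sub_cancel]

theorem sum_circulant_neg_mul_transpose [DecidableEq n] {ι : Type*} [Fintype ι]
    (a : ι → n → α) (hpm : ∀ j i, a j i = 1 ∨ a j i = -1)
    (hpaf : ∀ s, s ≠ 0 → ∑ j, periodicAutocorrelation (a j) s = 0) :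
    ∑ j, circulant (fun i => a j (-i)) * (circulant fun i => a j (-i))ᵀ =
      (Fintype.card ι * Fintype.card n : α) • 1 := by
  ext x y
  simp only [Matrix.sum_apply, circulant_neg_mul_transpose_apply, Matrix.smul_apply, one_apply]
  split_ifs with hxy
  · simp [hxy, periodicAutocorrelation_zero (hpm _)]
  · simpa using hpaf (x - y) (sub_ne_zero.mpr hxy)

end Autocorrelation

end Propus

open Propus in
/-- The Propus array built from four circulant `±1`-matrices whose periodic
autocorrelations sum to zero is a Hadamard matrix of order `4v`: `P Pᵀ = 4v I`. -/
theorem stmt13 (v : ℕ) [NeZero v] (a : Fin 4 → ZMod v → ℤ)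
    (hpm : ∀ j i, a j i = 1 ∨ a j i = -1)
    (hpaf : ∀ s : ZMod v, s ≠ 0 → ∑ j : Fin 4, ∑ i : ZMod v, a j i * a j (i + s) = 0)
    (C : Fin 4 → Matrix (ZMod v) (ZMod v) ℤ)
    (hC : ∀ j i k, C j i k = a j (k - i))
    (R : Matrix (ZMod v) (ZMod v) ℤ)
    (hR : ∀ i j, R i j = if i + j = -1 then 1 else 0)
    (P : Matrix (Fin 4 × ZMod v) (Fin 4 × ZMod v) ℤ)
    (hP : ∀ p q : Fin 4 × ZMod v, P p q =
      (![![-(C 0), C 1 * R, C 2 * R, C 3 * R],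
         ![C 2 * R, R * C 3, C 0, -(R * C 1)],
         ![C 1 * R, C 0, -(R * C 3), R * C 2],
         ![C 3 * R, -(R * C 2), R * C 1, C 0]] p.1 q.1) p.2 q.2) :
    P * P.transpose = (4 * (v : ℤ)) • (1 : Matrix (Fin 4 × ZMod v) (Fin 4 × ZMod v) ℤ) := by
  have hC_circ : C = fun j => circulant fun i => a j (-i) := by
    ext j i k; rw [hC, circulant_apply, neg_sub]
  have hR_back : R = backIdentity ℤ (-1) := by ext i j; exact hR i j
  have hP_comp : P = comp _ _ _ _ _ (propusArray C R) := by ext p q; exact hP p q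
  subst hC_circ hR_back hP_comp
  rw [transpose_comp, ← compRingEquiv_apply, ← compRingEquiv_apply, ← map_mul,
    propusArray_mul_transpose_map_transpose, sum_circulant_neg_mul_transpose a hpm hpaf]
  have hdiag (c : ℤ) :
      (diagonal fun _ : Fin 4 => c • (1 : Matrix (ZMod v) (ZMod v) ℤ)) = c • 1 :=
    diagonal_smul c 1
  rw [hdiag, map_zsmul, map_one, Fintype.card_fin, ZMod.card]
  norm_num
end

section
/- If in the Propus array the circulant matrix C_1 is symmetric and C_2 = C_3, then the resulting 4v × 4v matrix P = [-C_1, C_2R, C_3R, C_4R; C_3R, RC_4, C_1, -RC_2; C_2R, C_1, -RC_4, RC_3; C_4R, -RC_3, RC_2, C_1] is a symmetric matrix. -/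
/-! A circulant matrix times a back-circulant one, in either order, is again back-circulant
(its entries depend only on `i + j`), hence symmetric; `R` is back-circulant, so every block
`CᵢR`, `RCᵢ` is symmetric. With `C₁` symmetric and `C₂ = C₃` the array of blocks is itself
symmetric, and a block matrix with symmetric blocks arranged symmetrically is symmetric. -/

namespace Matrix

variable {α n : Type*}

def backCirculant [Add n] (f : n → α) : Matrix n n α :=
  of fun i j => f (i + j)

@[simp]
theorem backCirculant_apply [Add n] (f : n → α) (i j : n) : backCirculant f i j = f (i + j) :=
  rfl

theorem isSymm_backCirculant [AddCommMagma n] (f : n → α) : (backCirculant f).IsSymm :=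
  IsSymm.ext fun i j => by rw [backCirculant_apply, backCirculant_apply, add_comm]

theorem circulant_mul_backCirculant [NonUnitalNonAssocSemiring α] [Fintype n] [AddCommGroup n]
    (v f : n → α) :
    circulant v * backCirculant f = backCirculant fun s => ∑ y, v y * f (s - y) := by
  ext i k
  simp only [mul_apply, circulant_apply, backCirculant_apply]
  refine Fintype.sum_equiv (Equiv.subLeft i) _ _ fun x => ?_
  rw [Equiv.subLeft_apply, add_sub_sub_cancel, add_comm k x]

theorem backCirculant_mul_circulant [NonUnitalNonAssocSemiring α] [Fintype n] [AddCommGroup n]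
    (f v : n → α) :
    backCirculant f * circulant v = backCirculant fun s => ∑ y, f (s + y) * v y := by
  ext i k
  simp only [mul_apply, circulant_apply, backCirculant_apply]
  refine Fintype.sum_equiv (Equiv.subRight k) _ _ fun x => ?_
  rw [Equiv.subRight_apply, add_assoc, add_sub_cancel]

theorem isSymm_circulant_mul_backCirculant [NonUnitalNonAssocSemiring α] [Fintype n]
    [AddCommGroup n] (v f : n → α) : (circulant v * backCirculant f).IsSymm := by
  rw [circulant_mul_backCirculant]
  exact isSymm_backCirculant _

theorem isSymm_backCirculant_mul_circulant [NonUnitalNonAssocSemiring α] [Fintype n]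
    [AddCommGroup n] (f v : n → α) : (backCirculant f * circulant v).IsSymm := by
  rw [backCirculant_mul_circulant]
  exact isSymm_backCirculant _

theorem IsSymm.comp {I K R : Type*} {M : Matrix I I (Matrix K K R)} (hM : M.IsSymm)
    (hblocks : ∀ i j, (M i j).IsSymm) : (comp I I K K R M).IsSymm :=
  IsSymm.ext fun p q => by
    simp only [comp_apply]
    rw [hM.apply, (hblocks _ _).apply]

end Matrix

open Matrix

/-- If in the Propus array the circulant block `C₁` is symmetric and `C₂ = C₃`,
then the resulting `4v × 4v` matrix is symmetric. -/
theorem stmt14 (v : ℕ) [NeZero v] (a : Fin 4 → ZMod v → ℤ)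
    (C : Fin 4 → Matrix (ZMod v) (ZMod v) ℤ)
    (hC : ∀ j i k, C j i k = a j (k - i))
    (hsym : (C 0).IsSymm) (heq : C 1 = C 2)
    (R : Matrix (ZMod v) (ZMod v) ℤ)
    (hR : ∀ i j, R i j = if i + j = -1 then 1 else 0)
    (P : Matrix (Fin 4 × ZMod v) (Fin 4 × ZMod v) ℤ)
    (hP : ∀ p q : Fin 4 × ZMod v, P p q =
      (![![-(C 0), C 1 * R, C 2 * R, C 3 * R],
         ![C 2 * R, R * C 3, C 0, -(R * C 1)],
         ![C 1 * R, C 0, -(R * C 3), R * C 2],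
         ![C 3 * R, -(R * C 2), R * C 1, C 0]] p.1 q.1) p.2 q.2) :
    P.IsSymm := by
  have hCirc : ∀ j, C j = circulant fun x => a j (-x) := fun j => by
    ext i k
    rw [circulant_apply, hC, neg_sub]
  have hBack : R = backCirculant fun s => if s = -1 then 1 else 0 := by
    ext i k
    rw [hR, backCirculant_apply]
  have hCR : ∀ j, (C j * R).IsSymm := fun j => by
    rw [hCirc, hBack]
    exact isSymm_circulant_mul_backCirculant _ _
  have hRC : ∀ j, (R * C j).IsSymm := fun j => by
    rw [hCirc, hBack]
    exact isSymm_backCirculant_mul_circulant _ _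
  have hPcomp : P = comp _ _ _ _ _ (of ![![-(C 0), C 1 * R, C 2 * R, C 3 * R],
      ![C 2 * R, R * C 3, C 0, -(R * C 1)],
      ![C 1 * R, C 0, -(R * C 3), R * C 2],
      ![C 3 * R, -(R * C 2), R * C 1, C 0]]) := by
    ext p q
    exact hP p q
  rw [hPcomp, heq]
  refine IsSymm.comp (IsSymm.ext fun i j => ?_) fun i j => ?_
  · fin_cases i <;> fin_cases j <;> rfl
  · fin_cases i <;> fin_cases j <;> simp [hsym, hsym.neg, hCR, hRC, (hRC _).neg]
end

section
/- There is no propus parameter set (5; 1, 2, 2, 1; 1) difference family in Z_5 with X_2 = X_3 and X_1 or X_4 symmetric; i.e., there do not exist subsets X_1, X_2, X_3, X_4 of Z_5 with |X_1| = |X_4| = 1, |X_2| = |X_3| = 2, X_2 = X_3, X_1 or X_4 symmetric (closed under negation), such that every nonzero element of Z_5 has exactly 1 representation as a difference within a block. -/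
/-! A singleton block represents no nonzero difference, so only the two equal blocks `X 1 = X 2`
count, and they contribute the same number of representations of each `a ≠ 0`. The total is
therefore even and cannot be `1`. -/

open Finset

lemma card_filter_sub_eq_singleton_product {G : Type*} [AddGroup G] [DecidableEq G]
    (x : G) {a : G} (ha : a ≠ 0) :
    (({x} ×ˢ {x} : Finset (G × G)).filter (fun p => p.1 - p.2 = a)).card = 0 := by
  simp [filter_singleton, sub_self, ha.symm]

/-- There is no cyclic propus difference family with parameters `(5; 1, 2, 2, 1; 1)`. -/
theorem stmt16 :
    ¬∃ X : Fin 4 → Finset (ZMod 5),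
      (X 0).card = 1 ∧ (X 1).card = 2 ∧ (X 2).card = 2 ∧ (X 3).card = 1 ∧
      X 1 = X 2 ∧
      ((X 0).image (fun x => -x) = X 0 ∨ (X 3).image (fun x => -x) = X 3) ∧
      (∀ a : ZMod 5, a ≠ 0 →
        ∑ j : Fin 4, (((X j) ×ˢ (X j)).filter (fun p => p.1 - p.2 = a)).card = 1) := by
  rintro ⟨X, h0, -, -, h3, h12, -, hdiff⟩
  have ha : (1 : ZMod 5) ≠ 0 := by decide
  obtain ⟨x, hx⟩ := card_eq_one.mp h0
  obtain ⟨y, hy⟩ := card_eq_one.mp h3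
  have h := hdiff 1 ha
  rw [Fin.sum_univ_four, hx, hy, h12, card_filter_sub_eq_singleton_product x ha,
    card_filter_sub_eq_singleton_product y ha] at h
  omega
end
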